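/- For every saturation sequence I = S_0 ⊊ S_1 ⊊ ⋯ ⊊ S_i of a broadcast protocol B with costs c_0, c_1, …, c_i, there exist an initial configuration γ_0, a configuration γ = (N, E, L), and a reconfigurable execution ρ : γ_0 →_R* γ such that the set of labels appearing in γ is exactly S_i, the size of ρ is c_i, and every node n satisfies a_ρ(n) ≤ i. -/

import Mathlib

/-- A broadcast protocol over finite state set `Q` and finite message alphabet `M`.
`I` is the set of initial states, `br q m q'` means `(q, !!m, q') ∈ Δ` (a broadcast
transition) and `rcv q m q'` means `(q, ??m, q') ∈ Δ` (a reception transition).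
The protocol is complete for receptions. -/
structure BroadcastProtocol (Q M : Type) [Fintype Q] [DecidableEq Q] [Fintype M] where
  I : Finset Q
  br : Q → M → Q → Prop
  rcv : Q → M → Q → Prop
  complete : ∀ q m, ∃ q', rcv q m q'

section Execs
variable {Q M : Type} [Fintype Q] [DecidableEq Q] [Fintype M]

/-- A reconfigurable execution of length `r` over the finite node type `ν`:
`lab i v` is the state of node `v` in the `i`-th configuration, `edges i` is the
(symmetric, irreflexive) communication topology of the `i`-th configuration,
and in the `i`-th step node `sender i` broadcasts message `msg i` to its
neighbours; the topology may change arbitrarily at each step. -/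
structure RExec (P : BroadcastProtocol Q M) (ν : Type) [Fintype ν] [DecidableEq ν]
    (r : ℕ) where
  lab : Fin (r + 1) → ν → Q
  edges : Fin (r + 1) → ν → ν → Prop
  edges_symm : ∀ i, Symmetric (edges i)
  edges_irrefl : ∀ i, Irreflexive (edges i)
  sender : Fin r → ν
  msg : Fin r → M
  init : ∀ v, lab 0 v ∈ P.I
  step_br : ∀ i : Fin r, P.br (lab i.castSucc (sender i)) (msg i) (lab i.succ (sender i))
  step_rcv : ∀ i : Fin r, ∀ v, v ≠ sender i →
    (edges i.castSucc (sender i) v → P.rcv (lab i.castSucc v) (msg i) (lab i.succ v)) ∧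
    (¬ edges i.castSucc (sender i) v → lab i.succ v = lab i.castSucc v)

namespace RExec

variable {P : BroadcastProtocol Q M} {ν : Type} [Fintype ν] [DecidableEq ν] {r : ℕ}

/-- Labelling of the last configuration. -/
def lastLab (ρ : RExec P ν r) : ν → Q := ρ.lab (Fin.last r)

/-- The execution covers `F` if a node of the last configuration is labelled in `F`. -/
def Covers (ρ : RExec P ν r) (F : Set Q) : Prop := ∃ v, ρ.lastLab v ∈ F

/-- The active length of node `v`: the number of steps in which `v` broadcasts. -/
def activeLen (ρ : RExec P ν r) (v : ν) : ℕ :=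
  (Finset.univ.filter fun i : Fin r => ρ.sender i = v).card

end RExec

end Execs
/-- `IsSatSeq P len S c` says that `S 0, …, S len` is a saturation sequence with
costs `c 0, …, c len`, as produced by the refined saturation algorithm. -/
def IsSatSeq {Q M : Type} [Fintype Q] [DecidableEq Q] [Fintype M]
    (P : BroadcastProtocol Q M) (len : ℕ) (S : ℕ → Finset Q) (c : ℕ → ℕ) : Prop :=
  S 0 = P.I ∧ c 0 = P.I.card ∧
  ∀ j < len, ∃ q', q' ∉ S j ∧ S (j + 1) = insert q' (S j) ∧
    ((∃ q ∈ S j, ∃ m, P.br q m q' ∧ c (j + 1) = c j + 1) ∨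
     (∃ q ∈ S j, ∃ q'' ∈ S j, ∃ p ∈ S j, ∃ m,
        P.br q m q'' ∧ P.rcv p m q' ∧ c (j + 1) = c j + 2))

/-! Induction along the saturation sequence. The key fact is the copycat property of
reconfigurable executions: precomposing the final labelling with a surjection between node sets
is again reachable, each node replaying the history of its image and broadcasting exactly as
often. A broadcast stage adds a copy of a node in state `q`, which then performs `q !!m q'` on
its own; a reception stage adds copies of a node in `q` and of a node in `p`, and the first
broadcasts to the second only. -/

namespace BroadcastProtocol

variable {Q M : Type} [Fintype Q] [DecidableEq Q] [Fintype M] (P : BroadcastProtocol Q M)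
  {ν : Type}

def Step (L : ν → Q) (s : ν) (L' : ν → Q) : Prop :=
  ∃ (m : M) (G : SimpleGraph ν), P.br (L s) m (L' s) ∧
    ∀ w ≠ s, (G.Adj s w → P.rcv (L w) m (L' w)) ∧ (¬ G.Adj s w → L' w = L w)

variable [DecidableEq ν]

/-- `P.Reach L a`: some reconfigurable execution of `P` ends in the labelling `L`, node `v`
having broadcast `a v` times. -/
inductive Reach : (ν → Q) → (ν → ℕ) → Prop
  | init {L : ν → Q} : (∀ v, L v ∈ P.I) → Reach L 0
  | step {L L' : ν → Q} {a : ν → ℕ} {s : ν} :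
      Reach L a → P.Step L s L' → Reach L' (a + Pi.single s 1)

variable {P}

theorem Step.solo {L : ν → Q} {u : ν} {m : M} {q : Q} (hbr : P.br (L u) m q) :
    P.Step L u (Function.update L u q) :=
  ⟨m, ⊥, by simpa using hbr, fun w hw => ⟨fun h => h.elim, fun _ => by simp [hw]⟩⟩

theorem Step.pair {L : ν → Q} {u w : ν} {m : M} {q p : Q} (huw : u ≠ w)
    (hbr : P.br (L u) m q) (hrcv : P.rcv (L w) m p) :
    P.Step L u (Function.update (Function.update L u q) w p) := by
  refine ⟨m, SimpleGraph.edge u w, by simpa [huw] using hbr,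
    fun x hx => ⟨fun hadj => ?_, fun hnadj => ?_⟩⟩
  · obtain rfl : x = w := by simp_all [SimpleGraph.edge_adj]
    simpa using hrcv
  · have hxw : x ≠ w := by rintro rfl; exact hnadj ((SimpleGraph.edge_adj ..).2 (by simp [huw]))
    simp [hx, hxw]

variable {ν' : Type} [Fintype ν'] [DecidableEq ν']

open Finset in
theorem Step.comp {L L' : ν → Q} (f : ν' → ν) {s' : ν'} (h : P.Step L (f s') L') :
    P.Step (L ∘ f) s'
      ((univ.filter fun w => w ≠ s' ∧ f w = f s').piecewise (L ∘ f) (L' ∘ f)) := by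
  obtain ⟨m, G, hbr, hrcv⟩ := h
  refine ⟨m, G.comap f, by simpa using hbr, fun w hw => ?_⟩
  by_cases hfw : f w = f s'
  · simp [hw, hfw]
  · simpa [hfw] using hrcv (f w) hfw

theorem Reach.solo_each {L : ν → Q} {a : ν → ℕ} {q q' : Q} {m : M} (hR : P.Reach L a)
    (T : Finset ν) (hT : ∀ w ∈ T, L w = q) (hbr : P.br q m q') :
    P.Reach (T.piecewise (fun _ => q') L) (a + T.piecewise 1 0) := by
  induction T using Finset.induction_on with
  | empty => simpa using hR
  | insert x T hx ih =>
    have hLx : T.piecewise (fun _ => q') L x = q := by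
      rw [Finset.piecewise_eq_of_notMem _ _ _ hx, hT x (Finset.mem_insert_self x T)]
    have := (ih fun w hw => hT w (Finset.mem_insert_of_mem hw)).step
      (Step.solo (hLx ▸ hbr : P.br (T.piecewise (fun _ => q') L x) m q'))
    rw [Finset.piecewise_insert]
    convert this using 1
    ext w
    by_cases hw : w = x
    · subst hw; simp [hx]
    · simp [hw, Finset.piecewise_insert]

/-- One node of the sender's fibre performs the original step; the rest of the fibre then
repeats it alone. -/
theorem Reach.comp_surjective {L : ν → Q} {a : ν → ℕ} {f : ν' → ν}
    (hf : Function.Surjective f) (hR : P.Reach L a) : P.Reach (L ∘ f) (a ∘ f) := by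
  induction hR with
  | init hL => exact .init fun v => hL (f v)
  | @step L L' a s _ hstep ih =>
    obtain ⟨s', rfl⟩ := hf s
    obtain ⟨m, -, hbr, -⟩ := id hstep
    set T := Finset.univ.filter fun w => w ≠ s' ∧ f w = f s' with hT
    have hfT : ∀ w ∈ T, f w = f s' := fun w hw => (Finset.mem_filter.1 hw).2.2
    have := (ih.step (hstep.comp f)).solo_each T
      (fun w hw => by rw [← hT, Finset.piecewise_eq_of_mem _ _ _ hw, Function.comp, hfT w hw]) hbr
    convert this using 1
    · ext w
      by_cases hw : w ∈ T
      · simp [hw, hfT w hw]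
      · simp [hw, ← hT]
    · ext w
      by_cases hw : w = s'
      · subst hw; simp [T]
      · by_cases hfw : f w = f s' <;> simp [T, hw, hfw]

end BroadcastProtocol

namespace RExec

variable {Q M : Type} [Fintype Q] [DecidableEq Q] [Fintype M] {P : BroadcastProtocol Q M}
  {ν : Type} [Fintype ν] [DecidableEq ν] {r : ℕ}

def graph (ρ : RExec P ν r) (i : Fin (r + 1)) : SimpleGraph ν where
  Adj := ρ.edges i
  symm := ⟨fun _ _ h => ρ.edges_symm i h⟩
  loopless := ⟨ρ.edges_irrefl i⟩

def ofInit (L : ν → Q) (hL : ∀ v, L v ∈ P.I) : RExec P ν 0 where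
  lab _ := L
  edges _ := (⊥ : SimpleGraph ν).Adj
  edges_symm _ _ _ := id
  edges_irrefl _ _ := id
  sender := Fin.elim0
  msg := Fin.elim0
  init := hL
  step_br i := i.elim0
  step_rcv i := i.elim0

/-- The new step takes its topology from index `r`, where `ρ` stores the topology of its last
configuration; no step of `ρ` reads that one, so it is overwritten. -/
noncomputable def snoc (ρ : RExec P ν r) {s : ν} {L' : ν → Q} (h : P.Step ρ.lastLab s L') :
    RExec P ν (r + 1) :=
  let G : Fin (r + 2) → SimpleGraph ν :=
    Fin.snoc (Fin.snoc (Fin.init ρ.graph) h.choose_spec.choose) ⊥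
  { lab := Fin.snoc ρ.lab L'
    edges := fun i => (G i).Adj
    edges_symm := fun i _ _ => (G i).adj_symm
    edges_irrefl := fun i _ => (G i).irrefl
    sender := Fin.snoc ρ.sender s
    msg := Fin.snoc ρ.msg h.choose
    init := fun v => by simpa using ρ.init v
    step_br := fun i => by
      induction i using Fin.lastCases with
      | last => simpa [lastLab] using h.choose_spec.choose_spec.1
      | cast j => simpa only [Fin.succ_castSucc, Fin.snoc_castSucc] using ρ.step_br j
    step_rcv := fun i => by
      induction i using Fin.lastCases with
      | last => simpa [G, lastLab] using h.choose_spec.choose_spec.2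
      | cast j =>
        simpa only [G, Fin.succ_castSucc, Fin.snoc_castSucc, Fin.init, graph] using ρ.step_rcv j }

theorem ofInit_activeLen (L : ν → Q) (hL : ∀ v, L v ∈ P.I) :
    (ofInit L hL).activeLen = 0 := by
  ext v
  simp [activeLen]

theorem snoc_lastLab (ρ : RExec P ν r) {s : ν} {L' : ν → Q} (h : P.Step ρ.lastLab s L') :
    (ρ.snoc h).lastLab = L' := by
  simp [lastLab, snoc]

theorem snoc_activeLen (ρ : RExec P ν r) {s : ν} {L' : ν → Q} (h : P.Step ρ.lastLab s L') :
    (ρ.snoc h).activeLen = ρ.activeLen + Pi.single s 1 := by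
  ext v
  simp only [activeLen, Pi.add_apply, Pi.single_apply, Finset.card_filter]
  rw [Fin.sum_univ_castSucc]
  simp only [snoc, Fin.snoc_castSucc, Fin.snoc_last]
  exact congrArg _ (if_congr eq_comm rfl rfl)

end RExec

theorem BroadcastProtocol.Reach.exists_rexec {Q M : Type} [Fintype Q] [DecidableEq Q] [Fintype M]
    {P : BroadcastProtocol Q M} {ν : Type} [Fintype ν] [DecidableEq ν] {L : ν → Q}
    {a : ν → ℕ} (hR : P.Reach L a) :
    ∃ (r : ℕ) (ρ : RExec P ν r), ρ.lastLab = L ∧ ρ.activeLen = a := by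
  induction hR with
  | init hL => exact ⟨0, .ofInit _ hL, rfl, RExec.ofInit_activeLen _ hL⟩
  | step _ hstep ih =>
    obtain ⟨r, ρ, rfl, rfl⟩ := ih
    exact ⟨r + 1, ρ.snoc hstep, ρ.snoc_lastLab hstep, ρ.snoc_activeLen hstep⟩

namespace BroadcastProtocol

variable {Q M : Type} [Fintype Q] [DecidableEq Q] [Fintype M] (P : BroadcastProtocol Q M)

def Realizable (n : ℕ) (S : Set Q) (k : ℕ) : Prop :=
  ∃ (L : Fin n → Q) (a : Fin n → ℕ), P.Reach L a ∧ Set.range L = S ∧ ∀ v, a v ≤ k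

theorem realizable_initial : P.Realizable P.I.card P.I 0 := by
  refine ⟨fun v => P.I.equivFin.symm v, 0, .init fun v => (P.I.equivFin.symm v).2, ?_,
    fun _ => le_rfl⟩
  exact (P.I.equivFin.symm.surjective.range_comp Subtype.val).trans Subtype.range_coe

variable {P}

theorem Realizable.broadcast {n k : ℕ} {S : Set Q} {q q' : Q} {m : M}
    (hR : P.Realizable n S k) (hq : q ∈ S) (hbr : P.br q m q') :
    P.Realizable (n + 1) (insert q' S) (k + 1) := by
  obtain ⟨L, a, hR, rfl, ha⟩ := hR
  obtain ⟨v, rfl⟩ := hq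
  have hf : Function.Surjective (Fin.cons v id : Fin (n + 1) → Fin n) :=
    fun w => ⟨w.succ, rfl⟩
  refine ⟨_, _, (hR.comp_surjective hf).step (Step.solo (u := 0) (by simpa using hbr)), ?_, ?_⟩
  · rw [Fin.comp_cons, Fin.update_cons_zero, Fin.range_cons, Function.comp_id]
  · intro w
    cases w using Fin.cases <;> simp [Fin.succ_ne_zero, ha, Nat.le_succ_of_le]

theorem Realizable.reception {n k : ℕ} {S : Set Q} {q q'' p q' : Q} {m : M}
    (hR : P.Realizable n S k) (hq : q ∈ S) (hq'' : q'' ∈ S) (hp : p ∈ S)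
    (hbr : P.br q m q'') (hrcv : P.rcv p m q') :
    P.Realizable (n + 2) (insert q' S) (k + 1) := by
  obtain ⟨L, a, hR, rfl, ha⟩ := hR
  obtain ⟨u, rfl⟩ := hq
  obtain ⟨w, rfl⟩ := hp
  have hf : Function.Surjective (Fin.cons u (Fin.cons w id) : Fin (n + 2) → Fin n) :=
    fun x => ⟨x.succ.succ, rfl⟩
  refine ⟨_, _, (hR.comp_surjective hf).step
    (Step.pair (u := 0) (w := 1) Fin.zero_ne_one (by simpa using hbr) (by simpa using hrcv)),
    ?_, ?_⟩
  · rw [Fin.comp_cons, Fin.comp_cons, Function.comp_id, Fin.update_cons_zero,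
      ← Fin.succ_zero_eq_one, ← Fin.cons_update, Fin.update_cons_zero, Fin.range_cons,
      Fin.range_cons, Set.insert_comm, Set.insert_eq_of_mem hq'']
  · intro x
    cases x using Fin.cases <;> simp [Fin.succ_ne_zero, ha, Nat.le_succ_of_le]

end BroadcastProtocol

theorem IsSatSeq.realizable {Q M : Type} [Fintype Q] [DecidableEq Q] [Fintype M]
    {P : BroadcastProtocol Q M} {len : ℕ} {S : ℕ → Finset Q} {c : ℕ → ℕ}
    (h : IsSatSeq P len S c) {j : ℕ} (hj : j ≤ len) :
    P.Realizable (c j) (S j) j := by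
  obtain ⟨hS₀, hc₀, hstep⟩ := h
  induction j with
  | zero => simpa [hS₀, hc₀] using P.realizable_initial
  | succ j ih =>
    obtain ⟨q', -, hS, hcase⟩ := hstep j hj
    rw [hS, Finset.coe_insert]
    rcases hcase with ⟨q, hq, m, hbr, hc⟩ | ⟨q, hq, q'', hq'', p, hp, m, hbr, hrcv, hc⟩
    · exact hc ▸ (ih (by omega)).broadcast hq hbr
    · exact hc ▸ (ih (by omega)).reception hq hq'' hp hbr hrcv

/-- For every saturation sequence `I = S 0 ⊊ ⋯ ⊊ S i` with costs `c 0, …, c i`,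
there is a reconfigurable execution with exactly `c i` nodes whose last configuration
has exactly `S i` as its set of labels, and in which every node broadcasts at most
`i` times. -/
theorem satseq_reconfigurable_exec
    {Q M : Type} [Fintype Q] [DecidableEq Q] [Fintype M] (P : BroadcastProtocol Q M)
    (i : ℕ) (S : ℕ → Finset Q) (c : ℕ → ℕ) (h : IsSatSeq P i S c) :
    ∃ (r : ℕ) (ρ : RExec P (Fin (c i)) r),
      (∀ v, ρ.lastLab v ∈ S i) ∧
      (∀ q ∈ S i, ∃ v, ρ.lastLab v = q) ∧
      (∀ v, ρ.activeLen v ≤ i) := by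
  obtain ⟨L, a, hR, hL, ha⟩ := IsSatSeq.realizable h le_rfl
  obtain ⟨r, ρ, rfl, rfl⟩ := hR.exists_rexec
  have hmem (q : Q) : (∃ v, ρ.lastLab v = q) ↔ q ∈ S i := by simpa using Set.ext_iff.1 hL q
  exact ⟨r, ρ, fun v => (hmem _).1 ⟨v, rfl⟩, fun q hq => (hmem q).2 hq, ha⟩
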